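/- arXiv:2501.10887 — 2 statements merged into one kernel-verified Lean document; each statement's English description precedes it below -/
import Mathlib

section
/- A linear map d : V → V is a derivation of the Leibniz algebra L₁₉ if and only if there exist complex numbers a, b, m, p, q, r, s such that d(e₁) = a·e₁ + p·e₃ + q·e₄, d(e₂) = m·e₁ + b·e₂ + r·e₃ + s·e₄, d(e₃) = 2b·e₃ + m·e₄, and d(e₄) = (a+b)·e₄. Consequently, the space of derivations of L₁₉ is a 7-dimensional linear subspace of End(V). -/
/-- `V = ℂ⁴`. -/
abbrev V : Type := Fin 4 → ℂ

/-- standard basis: `e 0 = e₁`, ..., `e 3 = e₄`. -/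
def e (i : Fin 4) : V := Pi.single i 1

/-- Bracket of the Leibniz algebra `L₁₉`:
`⟦e₂,e₁⟧ = e₄`, `⟦e₂,e₂⟧ = e₃`, all other basis products zero. -/
def br (x y : V) : V :=
  (x 1 * y 1) • e 2 + (x 1 * y 0) • e 3

/-- A derivation. -/
def IsDer (d : V →ₗ[ℂ] V) : Prop :=
  ∀ x y : V, d (br x y) = br (d x) y + br x (d y)

/-!
Evaluating the derivation identity on the pairs `(e₁, e₂)`, `(e₂, e₂)` and `(e₂, e₁)` shows that
`d(e₁)` has no `e₂`-component and that `d(e₃)`, `d(e₄)` are determined by `d(e₁)` and `d(e₂)`;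
conversely a direct computation shows that every such map is a derivation. The seven free
entries of `d(e₁)` and `d(e₂)` are then linear coordinates on the space of derivations.
-/

namespace LinearMap

variable {R M : Type*} [CommSemiring R] [AddCommMonoid M] [Module R M]

def derivations (B : M →ₗ[R] M →ₗ[R] M) : Submodule R (Module.End R M) where
  carrier := {d | ∀ x y, d (B x y) = B (d x) y + B x (d y)}
  zero_mem' := by simp
  add_mem' {d d'} hd hd' x y := by
    simp only [add_apply, map_add, hd x y, hd' x y]
    abel
  smul_mem' c d hd x y := by simp [hd x y, smul_add]

end LinearMap

lemma e_apply (i j : Fin 4) : e i j = if j = i then 1 else 0 :=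
  Pi.single_apply i 1 j

def brₗ : V →ₗ[ℂ] V →ₗ[ℂ] V :=
  LinearMap.mk₂ ℂ br
    (fun x x' y => by simp only [br, Pi.add_apply, add_mul]; module)
    (fun c x y => by simp only [br, Pi.smul_apply, smul_eq_mul, mul_assoc]; module)
    (fun x y y' => by simp only [br, Pi.add_apply, mul_add]; module)
    (fun c x y => by simp only [br, Pi.smul_apply, smul_eq_mul]; module)

def derivationOfParams (a b m p q r s : ℂ) : Module.End ℂ V :=
  Matrix.toLin' !![a, m, 0, 0; 0, b, 0, 0; p, r, 2 * b, 0; q, s, m, a + b]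

lemma derivationOfParams_apply (a b m p q r s : ℂ) (x : V) :
    derivationOfParams a b m p q r s x =
      ![a * x 0 + m * x 1, b * x 1, p * x 0 + r * x 1 + 2 * b * x 2,
        q * x 0 + s * x 1 + m * x 2 + (a + b) * x 3] := by
  ext i
  fin_cases i <;> simp [derivationOfParams, Matrix.mulVec, dotProduct, Fin.sum_univ_four]

lemma isDer_derivationOfParams (a b m p q r s : ℂ) : IsDer (derivationOfParams a b m p q r s) := by
  intro x y
  ext i
  fin_cases i <;> simp [derivationOfParams_apply, br, e_apply] <;> ring

lemma derivationOfParams_apply_e (a b m p q r s : ℂ) :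
    derivationOfParams a b m p q r s (e 0) = a • e 0 + p • e 2 + q • e 3 ∧
    derivationOfParams a b m p q r s (e 1) = m • e 0 + b • e 1 + r • e 2 + s • e 3 ∧
    derivationOfParams a b m p q r s (e 2) = (2 * b) • e 2 + m • e 3 ∧
    derivationOfParams a b m p q r s (e 3) = (a + b) • e 3 := by
  refine ⟨?_, ?_, ?_, ?_⟩ <;>
  · ext i
    fin_cases i <;> simp [derivationOfParams_apply, e_apply]

lemma derivationOfParams_eq_iff (a b m p q r s : ℂ) (d : Module.End ℂ V) :
    derivationOfParams a b m p q r s = d ↔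
      d (e 0) = a • e 0 + p • e 2 + q • e 3 ∧
      d (e 1) = m • e 0 + b • e 1 + r • e 2 + s • e 3 ∧
      d (e 2) = (2 * b) • e 2 + m • e 3 ∧
      d (e 3) = (a + b) • e 3 := by
  constructor
  · rintro rfl
    exact derivationOfParams_apply_e a b m p q r s
  · rintro ⟨h0, h1, h2, h3⟩
    obtain ⟨k0, k1, k2, k3⟩ := derivationOfParams_apply_e a b m p q r s
    refine (Pi.basisFun ℂ (Fin 4)).ext fun i => ?_
    fin_cases i <;> simp only [Pi.basisFun_apply]
    exacts [k0.trans h0.symm, k1.trans h1.symm, k2.trans h2.symm, k3.trans h3.symm]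

lemma IsDer.eq_derivationOfParams {d : Module.End ℂ V} (hd : IsDer d) :
    derivationOfParams (d (e 0) 0) (d (e 1) 1) (d (e 1) 0) (d (e 0) 2) (d (e 0) 3)
      (d (e 1) 2) (d (e 1) 3) = d := by
  have hde0 : d (e 0) 1 = 0 := by simpa [br, e_apply] using (congrFun (hd (e 0) (e 1)) 2).symm
  have hde2 := hd (e 1) (e 1)
  have hde3 := hd (e 1) (e 0)
  simp [br, e_apply] at hde2 hde3
  rw [derivationOfParams_eq_iff]
  refine ⟨?_, ?_, ?_, ?_⟩
  · ext i; fin_cases i <;> simp [e_apply, hde0]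
  · ext i; fin_cases i <;> simp [e_apply]
  · rw [hde2]; module
  · rw [hde3, hde0]; module

lemma isDer_iff_exists_eq_derivationOfParams (d : Module.End ℂ V) :
    IsDer d ↔ ∃ a b m p q r s, derivationOfParams a b m p q r s = d := by
  refine ⟨fun hd => ⟨_, _, _, _, _, _, _, hd.eq_derivationOfParams⟩, ?_⟩
  rintro ⟨a, b, m, p, q, r, s, rfl⟩
  exact isDer_derivationOfParams a b m p q r s

def derivationParams : Module.End ℂ V →ₗ[ℂ] (Fin 7 → ℂ) where
  toFun d := ![d (e 0) 0, d (e 1) 1, d (e 1) 0, d (e 0) 2, d (e 0) 3, d (e 1) 2, d (e 1) 3]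
  map_add' _ _ := by ext i; fin_cases i <;> rfl
  map_smul' _ _ := by ext i; fin_cases i <;> rfl

lemma derivationParams_derivationOfParams (a b m p q r s : ℂ) :
    derivationParams (derivationOfParams a b m p q r s) = ![a, b, m, p, q, r, s] := by
  ext i
  fin_cases i <;> simp [derivationParams, derivationOfParams_apply, e_apply]

def derivationsEquiv : LinearMap.derivations brₗ ≃ₗ[ℂ] (Fin 7 → ℂ) where
  __ := derivationParams ∘ₗ (LinearMap.derivations brₗ).subtype
  invFun c := ⟨derivationOfParams (c 0) (c 1) (c 2) (c 3) (c 4) (c 5) (c 6),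
    isDer_derivationOfParams _ _ _ _ _ _ _⟩
  left_inv := by
    rintro ⟨d, hd⟩
    obtain ⟨a, b, m, p, q, r, s, rfl⟩ := (isDer_iff_exists_eq_derivationOfParams d).1 hd
    ext1
    simp [derivationParams_derivationOfParams]
  right_inv c := by
    ext i
    fin_cases i <;> simp [derivationParams_derivationOfParams]

lemma finrank_derivations_brₗ : Module.finrank ℂ (LinearMap.derivations brₗ) = 7 := by
  simp [derivationsEquiv.finrank_eq]

theorem derivations_of_L19 :
    (∀ d : V →ₗ[ℂ] V, IsDer d ↔ ∃ a b m p q r s : ℂ,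
      d (e 0) = a • e 0 + p • e 2 + q • e 3 ∧
      d (e 1) = m • e 0 + b • e 1 + r • e 2 + s • e 3 ∧
      d (e 2) = (2 * b) • e 2 + m • e 3 ∧
      d (e 3) = (a + b) • e 3) ∧
    ∃ S : Submodule ℂ (V →ₗ[ℂ] V),
      (S : Set (V →ₗ[ℂ] V)) = {d | IsDer d} ∧ Module.finrank ℂ S = 7 := by
  refine ⟨fun d => ?_, LinearMap.derivations brₗ, rfl, finrank_derivations_brₗ⟩
  simp only [isDer_iff_exists_eq_derivationOfParams, derivationOfParams_eq_iff]
end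

section
/- A linear map D : V → V is an antiderivation of the Leibniz algebra L₁₉ if and only if D(e₁) lies in the span of e₃ and e₄, D(e₂) is an arbitrary vector of V, and D(e₃) = D(e₄) = 0. Consequently, the space of antiderivations of L₁₉ is a 6-dimensional linear subspace of End(V). -/
/-- An antiderivation. -/
def IsAntiDer (D : V →ₗ[ℂ] V) : Prop :=
  ∀ x y : V, D (br x y) = br x (D y) - br y (D x)

/-!
The bracket of `L₁₉` only reads the `e₂`-coordinate of its left argument and the `e₁`, `e₂`
coordinates of its right one, and its values lie in `W = span{e₃, e₄}`, which is exactly the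
kernel of `⟦e₂, ·⟧`. Testing the antiderivation identity on `(e₂,e₂)`, `(e₁,e₂)` and `(e₂,e₁)`
forces `D e₃ = 0`, `D e₁ ∈ W` and `D e₄ = 0`. Conversely, under these conditions `D` kills
`W ⊇ ⟦V, V⟧`, while `⟦x, D y⟧ = x₂ y₂ ⟦e₂, D e₂⟧` is symmetric in `x, y`. The antiderivations
are then the kernel of the surjection `D ↦ (D(e₁)₁, D(e₁)₂, D e₃, D e₄)` onto `ℂ¹⁰`, of
dimension `16 - 10 = 6`.
-/

lemma eq_sum_smul_e (v : V) : v = v 0 • e 0 + v 1 • e 1 + v 2 • e 2 + v 3 • e 3 := by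
  funext i
  fin_cases i <;> simp [e]

lemma mem_span_e2_e3_iff {w : V} :
    w ∈ Submodule.span ℂ {e 2, e 3} ↔ w 0 = 0 ∧ w 1 = 0 := by
  constructor
  · intro hw
    obtain ⟨a, b, rfl⟩ := Submodule.mem_span_pair.1 hw
    simp [e]
  · rintro ⟨h0, h1⟩
    refine Submodule.mem_span_pair.2 ⟨w 2, w 3, ?_⟩
    funext i
    fin_cases i <;> simp [e, h0, h1]

lemma br_mem_span (x y : V) : br x y ∈ Submodule.span ℂ {e 2, e 3} :=
  Submodule.add_mem _ (Submodule.smul_mem _ _ (Submodule.subset_span (by simp)))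
    (Submodule.smul_mem _ _ (Submodule.subset_span (by simp)))

lemma br_e0_left (y : V) : br (e 0) y = 0 := by
  simp [br, e]

lemma br_e1_e1 : br (e 1) (e 1) = e 2 := by
  simp [br, e]

lemma br_e1_e0 : br (e 1) (e 0) = e 3 := by
  simp [br, e]

lemma br_e1_left_eq_zero_iff {y : V} :
    br (e 1) y = 0 ↔ y ∈ Submodule.span ℂ {e 2, e 3} := by
  rw [mem_span_e2_e3_iff, funext_iff]
  constructor
  · intro h
    exact ⟨by simpa [br, e] using h 3, by simpa [br, e] using h 2⟩
  · rintro ⟨h0, h1⟩ i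
    simp [br, h0, h1]

lemma apply_br_eq_zero {D : V →ₗ[ℂ] V} (h2 : D (e 2) = 0) (h3 : D (e 3) = 0) (x y : V) :
    D (br x y) = 0 := by
  have hW : Submodule.span ℂ {e 2, e 3} ≤ LinearMap.ker D :=
    Submodule.span_le.2 (by simp [Set.insert_subset_iff, h2, h3])
  exact hW (br_mem_span x y)

lemma br_apply_right {D : V →ₗ[ℂ] V} (h0 : D (e 0) ∈ Submodule.span ℂ {e 2, e 3})
    (h2 : D (e 2) = 0) (h3 : D (e 3) = 0) (x y : V) :
    br x (D y) = (x 1 * y 1) • br (e 1) (D (e 1)) := by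
  obtain ⟨c0, c1⟩ := mem_span_e2_e3_iff.1 h0
  have hDy : ∀ i, i = 0 ∨ i = 1 → D y i = y 1 * D (e 1) i := by
    rintro i (rfl | rfl) <;>
    · conv_lhs => rw [eq_sum_smul_e y]
      simp [h2, h3, c0, c1]
  have he : e 1 1 = 1 := Pi.single_eq_same 1 1
  simp only [br, hDy 0 (.inl rfl), hDy 1 (.inr rfl), he]
  module

lemma isAntiDer_of_mem_span {D : V →ₗ[ℂ] V} (h0 : D (e 0) ∈ Submodule.span ℂ {e 2, e 3})
    (h2 : D (e 2) = 0) (h3 : D (e 3) = 0) : IsAntiDer D := by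
  intro x y
  rw [apply_br_eq_zero h2 h3, br_apply_right h0 h2 h3 x y, br_apply_right h0 h2 h3 y x,
    mul_comm, sub_self]

lemma IsAntiDer.apply_e2 {D : V →ₗ[ℂ] V} (hD : IsAntiDer D) : D (e 2) = 0 := by
  simpa [br_e1_e1] using hD (e 1) (e 1)

lemma IsAntiDer.br_e1_apply_e0 {D : V →ₗ[ℂ] V} (hD : IsAntiDer D) :
    br (e 1) (D (e 0)) = 0 := by
  simpa [br_e0_left] using (hD (e 0) (e 1)).symm

lemma IsAntiDer.apply_e3 {D : V →ₗ[ℂ] V} (hD : IsAntiDer D) : D (e 3) = 0 := by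
  simpa [br_e1_e0, br_e0_left, hD.br_e1_apply_e0] using hD (e 1) (e 0)

lemma isAntiDer_iff (D : V →ₗ[ℂ] V) :
    IsAntiDer D ↔ D (e 0) ∈ Submodule.span ℂ {e 2, e 3} ∧ D (e 2) = 0 ∧ D (e 3) = 0 :=
  ⟨fun hD => ⟨br_e1_left_eq_zero_iff.1 hD.br_e1_apply_e0, hD.apply_e2, hD.apply_e3⟩,
    fun ⟨h0, h2, h3⟩ => isAntiDer_of_mem_span h0 h2 h3⟩

def antiDerConstraints : (V →ₗ[ℂ] V) →ₗ[ℂ] ℂ × ℂ × V × V where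
  toFun D := (D (e 0) 0, D (e 0) 1, D (e 2), D (e 3))
  map_add' _ _ := rfl
  map_smul' _ _ := rfl

lemma ker_antiDerConstraints :
    (LinearMap.ker antiDerConstraints : Set (V →ₗ[ℂ] V)) = {D | IsAntiDer D} := by
  ext D
  simp [antiDerConstraints, isAntiDer_iff, mem_span_e2_e3_iff, and_assoc]

lemma antiDerConstraints_surjective : Function.Surjective antiDerConstraints := by
  rintro ⟨a, b, u, v⟩
  let D := (Pi.basisFun ℂ (Fin 4)).constr ℂ ![a • e 0 + b • e 1, 0, u, v]
  have hD (i : Fin 4) : D (e i) = ![a • e 0 + b • e 1, 0, u, v] i := by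
    rw [e, ← Pi.basisFun_apply ℂ]
    exact (Pi.basisFun ℂ (Fin 4)).constr_basis ℂ _ i
  refine ⟨D, ?_⟩
  change (D (e 0) 0, D (e 0) 1, D (e 2), D (e 3)) = _
  simp only [hD]
  simp [e]

lemma finrank_ker_antiDerConstraints :
    Module.finrank ℂ (LinearMap.ker antiDerConstraints) = 6 := by
  have h := LinearMap.finrank_range_add_finrank_ker antiDerConstraints
  rw [LinearMap.range_eq_top.2 antiDerConstraints_surjective, finrank_top] at h
  have h16 : Module.finrank ℂ (V →ₗ[ℂ] V) = 16 := by simp [Module.finrank_linearMap]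
  have h10 : Module.finrank ℂ (ℂ × ℂ × V × V) = 10 := by simp [Module.finrank_prod]
  omega

/-- `D e₁ ∈ span{e₃,e₄}`, `D e₂` arbitrary, `D e₃ = D e₄ = 0`. -/
theorem antiderivations_of_L19 :
    (∀ D : V →ₗ[ℂ] V, IsAntiDer D ↔
      D (e 0) ∈ Submodule.span ℂ {e 2, e 3} ∧
      D (e 2) = 0 ∧ D (e 3) = 0) ∧
    ∃ S : Submodule ℂ (V →ₗ[ℂ] V),
      (S : Set (V →ₗ[ℂ] V)) = {D | IsAntiDer D} ∧ Module.finrank ℂ S = 6 :=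
  ⟨isAntiDer_iff, _, ker_antiDerConstraints, finrank_ker_antiDerConstraints⟩
end
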